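/- arXiv:2512.00956 — 3 statements merged into one kernel-verified Lean document; each statement's English description precedes it below -/
import Mathlib

section
/- Let X₁, …, X_d be zero-mean Laplace random variables (not necessarily independent) with diversity parameters b₁, …, b_d, and let b⋆ = max_k b_k. Then E[max_k X_k²] ≤ ((ln d)²/2 + ln d + 1) · max_k E[X_k²], where E[X_k²] = 2 b_k². -/
/-!
Let `B = max_k b_k` and `M = max_k |X_k|`. A union bound over the Laplace tails gives
`P(M > t) ≤ d e^{-t/B}`. In the layer-cake formula `E[M²] = ∫₀^∞ 2t P(M > t) dt` bound the
probability by `1` below `t₀ = B log d` and by `d e^{-t/B}` above it; the two pieces contribute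
`B² (log d)²` and `2B² (log d + 1)`.
-/

open MeasureTheory Set Filter Real
open scoped ENNReal

theorem lintegral_comp_abs (f : ℝ → ℝ≥0∞) :
    ∫⁻ x, f |x| = 2 * ∫⁻ x in Ioi 0, f x := by
  have hIic : ∫⁻ x in Iic 0, f |x| = ∫⁻ x in Ioi 0, f x := calc
    ∫⁻ x in Iic (0 : ℝ), f |x| = ∫⁻ x in Iic 0, f (-x) :=
      setLIntegral_congr_fun measurableSet_Iic fun x (hx : x ≤ 0) => by rw [abs_of_nonpos hx]
    _ = ∫⁻ x in Neg.neg ⁻¹' Ici 0, f (-x) := by rw [neg_preimage, neg_Ici, neg_zero]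
    _ = ∫⁻ x in Ici 0, f x :=
      (Measure.measurePreserving_neg volume).setLIntegral_comp_preimage_emb
        (MeasurableEquiv.neg ℝ).measurableEmbedding f _
    _ = ∫⁻ x in Ioi 0, f x := setLIntegral_congr Ioi_ae_eq_Ici.symm
  rw [← lintegral_add_compl _ measurableSet_Ioi, compl_Ioi, hIic, two_mul,
    setLIntegral_congr_fun measurableSet_Ioi fun x (hx : 0 < x) => by rw [abs_of_pos hx]]

theorem integral_Ioi_exp_neg_div {B : ℝ} (hB : 0 < B) (a : ℝ) :
    ∫ x in Ioi a, exp (-x / B) = B * exp (-a / B) := by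
  have h := integral_exp_mul_Ioi (neg_lt_zero.2 (inv_pos.2 hB)) a
  simp only [neg_mul, ← div_eq_inv_mul, neg_div] at h ⊢
  rw [h]; field_simp

theorem integrableOn_Ioi_exp_neg_div {B : ℝ} (hB : 0 < B) (a : ℝ) :
    IntegrableOn (fun x => exp (-x / B)) (Ioi a) := by
  have h := integrableOn_exp_mul_Ioi (neg_lt_zero.2 (inv_pos.2 hB)) a
  simpa only [neg_mul, ← div_eq_inv_mul, neg_div] using h

theorem hasDerivAt_mul_exp_neg_div {B : ℝ} (hB : 0 < B) (x : ℝ) :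
    HasDerivAt (fun y => -(B * y + B ^ 2) * exp (-y / B)) (x * exp (-x / B)) x := by
  have hexp : HasDerivAt (fun y => exp (-y / B)) (exp (-x / B) * (-1 / B)) x :=
    ((hasDerivAt_neg x).div_const B).exp
  have hlin : HasDerivAt (fun y => -(B * y + B ^ 2)) (-B) x :=
    (((hasDerivAt_id' x).const_mul B).add_const (B ^ 2)).neg.congr_deriv (by ring)
  refine (hlin.mul hexp).congr_deriv ?_
  field_simp
  ring

theorem tendsto_mul_exp_neg_div_atTop {B : ℝ} (hB : 0 < B) :
    Tendsto (fun y => -(B * y + B ^ 2) * exp (-y / B)) atTop (nhds 0) := by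
  have h := ((tendsto_pow_mul_exp_neg_atTop_nhds_zero 1).add
    tendsto_exp_neg_atTop_nhds_zero).const_mul (-B ^ 2)
  rw [zero_add, mul_zero] at h
  refine (h.comp (tendsto_id.atTop_div_const hB)).congr fun y => ?_
  simp only [Function.comp_apply, id, pow_one, neg_div]
  field_simp

theorem lintegral_Ioi_mul_exp_neg_div {B a : ℝ} (hB : 0 < B) (ha : 0 ≤ a) :
    ∫⁻ x in Ioi a, ENNReal.ofReal (x * exp (-x / B))
      = ENNReal.ofReal ((B * a + B ^ 2) * exp (-a / B)) := by
  have hderiv : ∀ x ∈ Ici a, HasDerivAt (fun y => -(B * y + B ^ 2) * exp (-y / B))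
      (x * exp (-x / B)) x := fun x _ => hasDerivAt_mul_exp_neg_div hB x
  have hnonneg : ∀ x ∈ Ioi a, 0 ≤ x * exp (-x / B) := fun x hx =>
    mul_nonneg (ha.trans (le_of_lt hx)) (exp_pos _).le
  rw [← ofReal_integral_eq_lintegral_ofReal
      (integrableOn_Ioi_deriv_of_nonneg' hderiv hnonneg (tendsto_mul_exp_neg_div_atTop hB))
      ((ae_restrict_iff' measurableSet_Ioi).2 (.of_forall hnonneg)),
    integral_Ioi_of_hasDerivAt_of_nonneg' hderiv hnonneg (tendsto_mul_exp_neg_div_atTop hB)]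
  ring_nf

theorem lintegral_Ioc_zero_ofReal {a : ℝ} (ha : 0 ≤ a) :
    ∫⁻ x in Ioc 0 a, ENNReal.ofReal x = ENNReal.ofReal (a ^ 2 / 2) := by
  rw [← ofReal_integral_eq_lintegral_ofReal
      ((intervalIntegrable_iff_integrableOn_Ioc_of_le ha).1 intervalIntegral.intervalIntegrable_id)
      ((ae_restrict_iff' measurableSet_Ioc).2 (.of_forall fun x hx => hx.1.le)),
    ← intervalIntegral.integral_of_le ha, integral_id]
  norm_num

noncomputable def laplacePDFReal (b x : ℝ) : ℝ := (2 * b)⁻¹ * exp (-|x| / b)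

noncomputable def laplaceMeasure (b : ℝ) : Measure ℝ :=
  volume.withDensity fun x => ENNReal.ofReal (laplacePDFReal b x)

theorem laplaceMeasure_lt_abs {b t : ℝ} (hb : 0 < b) (ht : 0 ≤ t) :
    laplaceMeasure b {x | t < |x|} = ENNReal.ofReal (exp (-t / b)) := by
  set g : ℝ → ℝ≥0∞ := fun y => ENNReal.ofReal ((2 * b)⁻¹ * exp (-y / b))
  have hset : MeasurableSet {x : ℝ | t < |x|} := measurableSet_lt measurable_const measurable_abs
  calc laplaceMeasure b {x | t < |x|}
      = ∫⁻ x, (Ioi t).indicator g |x| := by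
        rw [laplaceMeasure, withDensity_apply _ hset, ← lintegral_indicator hset]
        rfl
    _ = 2 * ∫⁻ y in Ioi t, g y := by
        rw [lintegral_comp_abs, lintegral_indicator measurableSet_Ioi,
          Measure.restrict_restrict measurableSet_Ioi, Ioi_inter_Ioi, max_eq_left ht]
    _ = ENNReal.ofReal (exp (-t / b)) := by
        rw [← ofReal_integral_eq_lintegral_ofReal
            ((integrableOn_Ioi_exp_neg_div hb t).const_mul _)
            (.of_forall fun y => by positivity),
          integral_const_mul, integral_Ioi_exp_neg_div hb, ← ENNReal.ofReal_ofNat 2,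
          ← ENNReal.ofReal_mul zero_le_two]
        congr 1
        field_simp

section

variable {Ω : Type*} [MeasurableSpace Ω] {μ : Measure Ω}

theorem measure_lt_iSup_le_sum {ι : Type*} [Fintype ι] [Nonempty ι] (f : ι → Ω → ℝ) (t : ℝ) :
    μ {ω | t < ⨆ i, f i ω} ≤ ∑ i, μ {ω | t < f i ω} := by
  refine (measure_mono fun ω hω => ?_).trans (measure_iUnion_fintype_le μ _)
  simpa using exists_lt_of_lt_ciSup hω

theorem measure_lt_abs_le_of_map_eq_laplaceMeasure {X : Ω → ℝ} (hX : Measurable X)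
    {b B t : ℝ} (hb : 0 < b) (hbB : b ≤ B) (hlaplace : μ.map X = laplaceMeasure b) (ht : 0 ≤ t) :
    μ {ω | t < |X ω|} ≤ ENNReal.ofReal (exp (-t / B)) := by
  change μ (X ⁻¹' {x | t < |x|}) ≤ _
  rw [← Measure.map_apply hX (measurableSet_lt measurable_const measurable_abs), hlaplace,
    laplaceMeasure_lt_abs hb ht, neg_div, neg_div]
  gcongr

theorem lintegral_sq_eq_lintegral_meas_lt_mul {f : Ω → ℝ} (hf : 0 ≤ᵐ[μ] f)
    (hfm : AEMeasurable f μ) :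
    ∫⁻ ω, ENNReal.ofReal (f ω ^ 2) ∂μ
      = 2 * ∫⁻ t in Ioi 0, μ {ω | t < f ω} * ENNReal.ofReal t := by
  have h := lintegral_rpow_eq_lintegral_meas_lt_mul μ hf hfm two_pos
  norm_num at h
  exact h

theorem lintegral_meas_lt_mul_le_of_meas_lt_le_exp [IsProbabilityMeasure μ] {f : Ω → ℝ}
    {B c : ℝ} (hB : 0 < B) (hc : 1 ≤ c)
    (htail : ∀ t, 0 ≤ t → μ {ω | t < f ω} ≤ ENNReal.ofReal (c * exp (-t / B))) :
    ∫⁻ t in Ioi 0, μ {ω | t < f ω} * ENNReal.ofReal t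
      ≤ ENNReal.ofReal (B ^ 2 * (log c ^ 2 / 2 + log c + 1)) := by
  -- the tail bound `c * exp (-t / B)` drops to `1` at `t₀`
  set t₀ := B * log c
  have ht₀ : 0 ≤ t₀ := mul_nonneg hB.le (log_nonneg hc)
  have hsmall : ∫⁻ t in Ioc 0 t₀, μ {ω | t < f ω} * ENNReal.ofReal t
      ≤ ENNReal.ofReal (t₀ ^ 2 / 2) := calc
    _ ≤ ∫⁻ t in Ioc 0 t₀, ENNReal.ofReal t :=
      lintegral_mono fun t => mul_le_of_le_one_left' prob_le_one
    _ = ENNReal.ofReal (t₀ ^ 2 / 2) := lintegral_Ioc_zero_ofReal ht₀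
  have hlarge : ∫⁻ t in Ioi t₀, μ {ω | t < f ω} * ENNReal.ofReal t
      ≤ ENNReal.ofReal (B * t₀ + B ^ 2) := calc
    _ ≤ ∫⁻ t in Ioi t₀, ENNReal.ofReal c * ENNReal.ofReal (t * exp (-t / B)) := by
      refine setLIntegral_mono (by fun_prop) fun t (ht : t₀ < t) => ?_
      rw [← ENNReal.ofReal_mul (zero_le_one.trans hc), mul_left_comm, mul_comm t,
        ENNReal.ofReal_mul (by positivity)]
      exact mul_le_mul_left (htail t (ht₀.trans ht.le)) _
    _ = ENNReal.ofReal (B * t₀ + B ^ 2) := by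
      rw [lintegral_const_mul' _ _ ENNReal.ofReal_ne_top, lintegral_Ioi_mul_exp_neg_div hB ht₀,
        ← ENNReal.ofReal_mul (zero_le_one.trans hc)]
      congr 1
      rw [neg_div, mul_div_cancel_left₀ _ hB.ne', exp_neg, exp_log (by linarith)]
      field_simp
  rw [← Ioc_union_Ioi_eq_Ioi ht₀, lintegral_union measurableSet_Ioi Ioc_disjoint_Ioi_same]
  calc _ ≤ ENNReal.ofReal (t₀ ^ 2 / 2) + ENNReal.ofReal (B * t₀ + B ^ 2) :=
        add_le_add hsmall hlarge
    _ = ENNReal.ofReal (B ^ 2 * (log c ^ 2 / 2 + log c + 1)) := by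
      rw [← ENNReal.ofReal_add (by positivity) (by positivity)]
      congr 1
      simp only [t₀]
      ring

theorem integral_sq_le_of_meas_lt_le_exp [IsProbabilityMeasure μ] {f : Ω → ℝ}
    (hf : 0 ≤ᵐ[μ] f) (hfm : AEMeasurable f μ) {B c : ℝ} (hB : 0 < B) (hc : 1 ≤ c)
    (htail : ∀ t, 0 ≤ t → μ {ω | t < f ω} ≤ ENNReal.ofReal (c * exp (-t / B))) :
    ∫ ω, f ω ^ 2 ∂μ ≤ B ^ 2 * (log c ^ 2 + 2 * log c + 2) := by
  rw [integral_eq_lintegral_of_nonneg_ae (.of_forall fun ω => sq_nonneg _)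
    (hfm.pow_const 2).aestronglyMeasurable]
  have hlog : 0 ≤ log c := log_nonneg hc
  refine ENNReal.toReal_le_of_le_ofReal (by positivity) ?_
  calc ∫⁻ ω, ENNReal.ofReal (f ω ^ 2) ∂μ
      = 2 * ∫⁻ t in Ioi 0, μ {ω | t < f ω} * ENNReal.ofReal t :=
        lintegral_sq_eq_lintegral_meas_lt_mul hf hfm
    _ ≤ 2 * ENNReal.ofReal (B ^ 2 * (log c ^ 2 / 2 + log c + 1)) := by
        gcongr
        exact lintegral_meas_lt_mul_le_of_meas_lt_le_exp hB hc htail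
    _ = ENNReal.ofReal (B ^ 2 * (log c ^ 2 + 2 * log c + 2)) := by
        rw [← ENNReal.ofReal_ofNat 2, ← ENNReal.ofReal_mul zero_le_two]
        ring_nf

end

/-- Maximum inequality for (not necessarily independent) zero-mean Laplacians:
if `X_k ~ Laplace(0, b_k)` then
`E[max_k X_k²] ≤ ((ln d)²/2 + ln d + 1) · max_k E[X_k²]` with `E[X_k²] = 2 b_k²`. -/
theorem laplace_max_sq_le
    {Ω : Type*} [MeasurableSpace Ω] (μ : Measure Ω) [IsProbabilityMeasure μ]
    (d : ℕ) (hd : 0 < d) (X : Fin d → Ω → ℝ) (b : Fin d → ℝ)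
    (hb : ∀ k, 0 < b k) (hX : ∀ k, Measurable (X k))
    (hlaplace : ∀ k, Measure.map (X k) μ =
      volume.withDensity (fun x => ENNReal.ofReal ((2 * b k)⁻¹ * Real.exp (-|x| / b k)))) :
    ∫ ω, (⨆ k, (X k ω) ^ 2) ∂μ
      ≤ ((Real.log d) ^ 2 / 2 + Real.log d + 1) * ⨆ k, 2 * (b k) ^ 2 := by
  have : Nonempty (Fin d) := ⟨⟨0, hd⟩⟩
  obtain ⟨k₀, hk₀⟩ := Finite.exists_max b
  set M : Ω → ℝ := fun ω => √(⨆ k, X k ω ^ 2)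
  have hM_sq (ω : Ω) : M ω ^ 2 = ⨆ k, X k ω ^ 2 :=
    sq_sqrt (iSup_nonneg fun k => sq_nonneg _)
  have htail (t : ℝ) (ht : 0 ≤ t) : μ {ω | t < M ω} ≤ ENNReal.ofReal (d * exp (-t / b k₀)) := by
    calc μ {ω | t < M ω} = μ {ω | t ^ 2 < ⨆ k, X k ω ^ 2} := by simp only [M, lt_sqrt ht]
      _ ≤ ∑ k, μ {ω | t ^ 2 < X k ω ^ 2} := measure_lt_iSup_le_sum _ _
      _ = ∑ k, μ {ω | t < |X k ω|} := by simp only [sq_lt_sq, abs_of_nonneg ht]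
      _ ≤ ∑ _k : Fin d, ENNReal.ofReal (exp (-t / b k₀)) := Finset.sum_le_sum fun k _ =>
          measure_lt_abs_le_of_map_eq_laplaceMeasure (hX k) (hb k) (hk₀ k) (hlaplace k) ht
      _ = ENNReal.ofReal (d * exp (-t / b k₀)) := by
          rw [Finset.sum_const, Finset.card_univ, Fintype.card_fin, nsmul_eq_mul,
            ENNReal.ofReal_mul (Nat.cast_nonneg d), ENNReal.ofReal_natCast]
  calc ∫ ω, (⨆ k, X k ω ^ 2) ∂μ = ∫ ω, M ω ^ 2 ∂μ := by simp only [hM_sq]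
    _ ≤ b k₀ ^ 2 * (log d ^ 2 + 2 * log d + 2) :=
        integral_sq_le_of_meas_lt_le_exp (.of_forall fun ω => sqrt_nonneg _)
          (Measurable.iSup fun k => (hX k).pow_const 2).sqrt.aemeasurable (hb k₀)
          (Nat.one_le_cast.2 hd) htail
    _ = (log d ^ 2 / 2 + log d + 1) * (2 * b k₀ ^ 2) := by ring
    _ ≤ (log d ^ 2 / 2 + log d + 1) * ⨆ k, 2 * b k ^ 2 := by
        gcongr
        exact le_ciSup (f := fun k => 2 * b k ^ 2) (Finite.bddAbove_range _) k₀
end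

section
/- Let T be an invertible d×d matrix with singular value decomposition components: T = U' S' Rᵀ S⁻¹ Uᵀ where U, U', R are orthogonal and S, S' positive definite diagonal. Then Σ_{k=1}^d ‖S R S'⁻¹ U'ᵀ e_k‖² · ‖R S' U'ᵀ e_k‖² ≥ d⁻¹ (tr S)². -/
/-!
Let `a_k = A e_k`, `b_k = B e_k` be the columns of `A = S R S'⁻¹ U'ᵀ` and `B = R S' U'ᵀ`.
Cauchy–Schwarz gives `⟪a_k, b_k⟫² ≤ ‖a_k‖² ‖b_k‖²`, and the `⟪a_k, b_k⟫` are the diagonal entries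
of `Aᵀ B = U' S'⁻¹ Rᵀ S R S' U'ᵀ`, whose trace is `tr S` by cyclicity and orthogonality.
Jensen's inequality `(∑ₖ cₖ)² ≤ d ∑ₖ cₖ²` on these diagonal entries finishes the proof.
-/

open Matrix

section

variable {n : Type*} [Fintype n] [DecidableEq n]

theorem sq_transpose_mul_apply_self_le (A B : Matrix n n ℝ) (k : n) :
    (Aᵀ * B) k k ^ 2 ≤
      (∑ j, (A *ᵥ Pi.single k 1) j ^ 2) * ∑ j, (B *ᵥ Pi.single k 1) j ^ 2 := by
  simp only [mulVec_single_one, col_apply, mul_apply, transpose_apply]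
  exact Finset.sum_mul_sq_le_sq_mul_sq _ _ _

theorem sq_trace_transpose_mul_div_card_le (A B : Matrix n n ℝ) :
    (Aᵀ * B).trace ^ 2 / Fintype.card n ≤
      ∑ k, (∑ j, (A *ᵥ Pi.single k 1) j ^ 2) * ∑ j, (B *ᵥ Pi.single k 1) j ^ 2 := by
  refine div_le_of_le_mul₀ (Nat.cast_nonneg _) (by positivity) ?_
  rw [mul_comm]
  calc (Aᵀ * B).trace ^ 2 ≤ Fintype.card n * ∑ k, (Aᵀ * B) k k ^ 2 :=
        sq_sum_le_card_mul_sum_sq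
    _ ≤ _ := by
        gcongr with k
        exact sq_transpose_mul_apply_self_le A B k

theorem trace_transpose_mul_eq_trace (D R E F V : Matrix n n ℝ)
    (hR : R * Rᵀ = 1) (hV : V * Vᵀ = 1) (hFE : F * Eᵀ = 1) :
    ((D * R * E * Vᵀ)ᵀ * (R * F * Vᵀ)).trace = D.trace := by
  have hV' : Vᵀ * V = 1 := mul_eq_one_comm.mp hV
  calc ((D * R * E * Vᵀ)ᵀ * (R * F * Vᵀ)).trace
      = (V * (Eᵀ * Rᵀ * Dᵀ * R * F) * Vᵀ).trace := by
        simp only [transpose_mul, transpose_transpose, Matrix.mul_assoc]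
    _ = (Rᵀ * Dᵀ * R * (F * Eᵀ)).trace := by
        rw [trace_mul_cycle, hV', Matrix.one_mul]
        simp only [Matrix.mul_assoc]
        rw [trace_mul_comm]
        simp only [Matrix.mul_assoc]
    _ = (Dᵀ * (R * Rᵀ)).trace := by
        rw [hFE, Matrix.mul_one, trace_mul_comm, ← Matrix.mul_assoc, trace_mul_comm]
    _ = D.trace := by rw [hR, Matrix.mul_one, trace_transpose]

end

theorem fp_loss_lower_bound_general
    (d : ℕ)
    (U' R : Matrix (Fin d) (Fin d) ℝ)
    (hU' : U' * U'ᵀ = 1) (hR : R * Rᵀ = 1)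
    (s s' : Fin d → ℝ) (hs' : ∀ k, 0 < s' k) :
    ∑ k : Fin d,
        (∑ j, ((Matrix.diagonal s * R * Matrix.diagonal (fun i => (s' i)⁻¹) * U'ᵀ).mulVec
          (Pi.single k 1) j) ^ 2) *
        (∑ j, ((R * Matrix.diagonal s' * U'ᵀ).mulVec (Pi.single k 1) j) ^ 2)
      ≥ (d : ℝ)⁻¹ * (Matrix.trace (Matrix.diagonal s)) ^ 2 := by
  have hinv : diagonal s' * (diagonal fun i => (s' i)⁻¹)ᵀ = 1 := by
    rw [diagonal_transpose, diagonal_mul_diagonal, ← diagonal_one]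
    exact congrArg diagonal (funext fun i => mul_inv_cancel₀ (hs' i).ne')
  have h := sq_trace_transpose_mul_div_card_le
    (diagonal s * R * diagonal (fun i => (s' i)⁻¹) * U'ᵀ) (R * diagonal s' * U'ᵀ)
  rw [trace_transpose_mul_eq_trace _ _ _ _ _ hR hU' hinv, Fintype.card_fin] at h
  rwa [ge_iff_le, inv_mul_eq_div]

/-- Core inequality for the FP loss: for orthogonal `U, U', R` and positive
diagonal `S, S'`,
`Σ_k ‖S R S'⁻¹ U'ᵀ e_k‖² · ‖R S' U'ᵀ e_k‖² ≥ d⁻¹ (tr S)²`. -/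
theorem fp_loss_lower_bound
    (d : ℕ) (hd : 0 < d)
    (U U' R : Matrix (Fin d) (Fin d) ℝ)
    (hU : U * Uᵀ = 1) (hU' : U' * U'ᵀ = 1) (hR : R * Rᵀ = 1)
    (s s' : Fin d → ℝ) (hs : ∀ k, 0 < s k) (hs' : ∀ k, 0 < s' k) :
    ∑ k : Fin d,
        (∑ j, ((Matrix.diagonal s * R * Matrix.diagonal (fun i => (s' i)⁻¹) * U'ᵀ).mulVec
          (Pi.single k 1) j) ^ 2) *
        (∑ j, ((R * Matrix.diagonal s' * U'ᵀ).mulVec (Pi.single k 1) j) ^ 2)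
      ≥ (d : ℝ)⁻¹ * (Matrix.trace (Matrix.diagonal s)) ^ 2 :=
  fp_loss_lower_bound_general d U' R hU' hR s s' hs'
end

section
/- Let T be invertible with parameterization T = U' S' Rᵀ S⁻¹ Uᵀ (U, U', R orthogonal; S, S' positive definite diagonal). Then tr(T⁻¹ ((U' S'² U'ᵀ) ⊙ I) T⁻ᵀ) ≥ d⁻¹ (tr S)², where ⊙ is the elementwise (Hadamard) product with the identity, i.e., the diagonal part. Equality is attained by choosing U' a normalized Hadamard matrix, S' = S^{1/2}, and R = I. -/
open Matrix

/-- Optimality of the WUSH transform for FP quantization: with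
`T = U' S' Rᵀ S⁻¹ Uᵀ`,
`tr(T⁻¹ ((U' S'² U'ᵀ) ⊙ I) T⁻ᵀ) ≥ d⁻¹ (tr S)²`, and equality is attained by
choosing `U'` a normalized Hadamard matrix, `S' = S^{1/2}`, and `R = 1`. -/
theorem wush_fp_optimal
    (d : ℕ) (hd : 0 < d)
    (U U' R : Matrix (Fin d) (Fin d) ℝ)
    (hU : U * Uᵀ = 1) (hU' : U' * U'ᵀ = 1) (hR : R * Rᵀ = 1)
    (s s' : Fin d → ℝ) (hs : ∀ k, 0 < s k) (hs' : ∀ k, 0 < s' k)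
    (T : Matrix (Fin d) (Fin d) ℝ)
    (hT : T = U' * Matrix.diagonal s' * Rᵀ * (Matrix.diagonal s)⁻¹ * Uᵀ) :
    Matrix.trace (T⁻¹ *
        Matrix.diagonal (fun k =>
          (U' * Matrix.diagonal (fun i => (s' i) ^ 2) * U'ᵀ) k k) * (T⁻¹)ᵀ)
      ≥ (d : ℝ)⁻¹ * (Matrix.trace (Matrix.diagonal s)) ^ 2 ∧
    ((∀ j k, U' j k = (Real.sqrt d)⁻¹ ∨ U' j k = -(Real.sqrt d)⁻¹) →
      (∀ k, s' k = Real.sqrt (s k)) → R = 1 →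
      Matrix.trace (T⁻¹ *
          Matrix.diagonal (fun k =>
            (U' * Matrix.diagonal (fun i => (s' i) ^ 2) * U'ᵀ) k k) * (T⁻¹)ᵀ)
        = (d : ℝ)⁻¹ * (Matrix.trace (Matrix.diagonal s)) ^ 2) := by
  have hUtU : Uᵀ * U = 1 := mul_eq_one_comm.mp hU
  have hRtR : Rᵀ * R = 1 := mul_eq_one_comm.mp hR
  have hU'tU' : U'ᵀ * U' = 1 := mul_eq_one_comm.mp hU'
  have hSinv : (Matrix.diagonal s)⁻¹ = Matrix.diagonal (fun i => (s i)⁻¹) := by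
    apply Matrix.inv_eq_right_inv
    rw [Matrix.diagonal_mul_diagonal]
    have : (fun i => s i * (s i)⁻¹) = fun _ => (1 : ℝ) :=
      funext fun i => mul_inv_cancel₀ (hs i).ne'
    rw [this, Matrix.diagonal_one]
  have hS'inv : Matrix.diagonal s' * Matrix.diagonal (fun i => (s' i)⁻¹) = 1 := by
    rw [Matrix.diagonal_mul_diagonal]
    have : (fun i => s' i * (s' i)⁻¹) = fun _ => (1 : ℝ) :=
      funext fun i => mul_inv_cancel₀ (hs' i).ne'
    rw [this, Matrix.diagonal_one]
  set B : Matrix (Fin d) (Fin d) ℝ :=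
    Matrix.diagonal s * R * Matrix.diagonal (fun i => (s' i)⁻¹) * U'ᵀ with hBdef
  set C : Matrix (Fin d) (Fin d) ℝ := U' * Matrix.diagonal s' * Rᵀ with hCdef
  -- T⁻¹ = U * B
  have hTinv : T⁻¹ = U * B := by
    apply Matrix.inv_eq_right_inv
    rw [hT, hCdef, hBdef, hSinv]
    simp only [Matrix.mul_assoc]
    rw [← Matrix.mul_assoc Uᵀ U, hUtU, Matrix.one_mul]
    rw [← Matrix.mul_assoc (Matrix.diagonal fun i => (s i)⁻¹) (Matrix.diagonal s),
      Matrix.diagonal_mul_diagonal]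
    have : (fun i => (s i)⁻¹ * s i) = fun _ => (1 : ℝ) :=
      funext fun i => inv_mul_cancel₀ (hs i).ne'
    rw [this, Matrix.diagonal_one, Matrix.one_mul]
    rw [← Matrix.mul_assoc Rᵀ R, hRtR, Matrix.one_mul]
    rw [← Matrix.mul_assoc (Matrix.diagonal s') _, hS'inv, Matrix.one_mul, hU']
  set D : Fin d → ℝ :=
    fun k => (U' * Matrix.diagonal (fun i => (s' i) ^ 2) * U'ᵀ) k k with hDdef
  set Q : Fin d → ℝ := fun k => ∑ j, (B j k) ^ 2 with hQdef
  -- trace formula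
  have hTr : Matrix.trace (T⁻¹ * Matrix.diagonal D * (T⁻¹)ᵀ)
      = ∑ k, D k * Q k := by
    rw [hTinv]
    have h1 : (U * B) * Matrix.diagonal D * (U * B)ᵀ
        = U * (B * Matrix.diagonal D * Bᵀ * Uᵀ) := by
      simp [Matrix.mul_assoc]
    rw [h1, Matrix.trace_mul_comm, Matrix.mul_assoc _ Uᵀ U, hUtU, Matrix.mul_one]
    rw [Matrix.mul_assoc, Matrix.trace_mul_comm, Matrix.mul_assoc, Matrix.trace]
    refine Finset.sum_congr rfl fun k _ => ?_
    rw [Matrix.diag_apply, Matrix.diagonal_mul, Matrix.mul_apply, hQdef,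
      Finset.mul_sum]
    simp only [Matrix.transpose_apply]
    rw [Finset.mul_sum]
    exact Finset.sum_congr rfl fun j _ => by ring
  -- D k as a sum of squares of the rows of C
  have hCC : C * Cᵀ = U' * Matrix.diagonal (fun i => (s' i) ^ 2) * U'ᵀ := by
    rw [hCdef]
    simp only [Matrix.transpose_mul, Matrix.transpose_transpose,
      Matrix.diagonal_transpose, Matrix.mul_assoc]
    rw [← Matrix.mul_assoc Rᵀ R, hRtR, Matrix.one_mul,
      ← Matrix.mul_assoc (Matrix.diagonal s'), Matrix.diagonal_mul_diagonal]
    congr 2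
    ext i
    ring
  have hD : ∀ k, D k = ∑ j, (C k j) ^ 2 := by
    intro k
    have h := congrArg (fun M : Matrix (Fin d) (Fin d) ℝ => M k k) hCC
    calc D k = (C * Cᵀ) k k := h.symm
      _ = ∑ j, (C k j) ^ 2 := by
          rw [Matrix.mul_apply]
          exact Finset.sum_congr rfl fun j _ => by
            rw [Matrix.transpose_apply, sq]
  have hDnn : ∀ k, 0 ≤ D k := fun k => by
    rw [hD k]; exact Finset.sum_nonneg fun j _ => sq_nonneg _
  have hQnn : ∀ k, 0 ≤ Q k := fun k =>
    Finset.sum_nonneg fun j _ => sq_nonneg _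
  -- B * C = diagonal s
  have hBC : B * C = Matrix.diagonal s := by
    rw [hBdef, hCdef]
    simp only [Matrix.mul_assoc]
    rw [← Matrix.mul_assoc U'ᵀ U', hU'tU', Matrix.one_mul,
      ← Matrix.mul_assoc (Matrix.diagonal fun i => (s' i)⁻¹), Matrix.diagonal_mul_diagonal]
    have : (fun i => (s' i)⁻¹ * s' i) = fun _ => (1 : ℝ) :=
      funext fun i => inv_mul_cancel₀ (hs' i).ne'
    rw [this, Matrix.diagonal_one, Matrix.one_mul, hR, Matrix.mul_one]
  have htrS : Matrix.trace (Matrix.diagonal s) = ∑ k, s k := Matrix.trace_diagonal s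
  -- the Cauchy–Schwarz chain
  have hkey : (∑ k, s k) ^ 2 ≤ (d : ℝ) * ∑ k, D k * Q k := by
    have htrCB : ∑ k, s k = ∑ k, (C * B) k k := by
      have h : Matrix.trace (C * B) = ∑ k, s k := by
        rw [Matrix.trace_mul_comm, hBC, Matrix.trace_diagonal]
      rw [← h, Matrix.trace]
      exact Finset.sum_congr rfl fun k _ => rfl
    have hstep1 : ∀ k : Fin d, (C * B) k k ≤ Real.sqrt (D k * Q k) := by
      intro k
      have h1 : (C * B) k k = ∑ j, C k j * B j k := Matrix.mul_apply
      have h2 : (∑ j, C k j * B j k) ^ 2 ≤ D k * Q k := by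
        rw [hD k, hQdef]
        exact Finset.sum_mul_sq_le_sq_mul_sq Finset.univ _ _
      calc (C * B) k k = ∑ j, C k j * B j k := h1
        _ ≤ |∑ j, C k j * B j k| := le_abs_self _
        _ = Real.sqrt ((∑ j, C k j * B j k) ^ 2) := (Real.sqrt_sq_eq_abs _).symm
        _ ≤ Real.sqrt (D k * Q k) := Real.sqrt_le_sqrt h2
    have hstep2 : (∑ k, Real.sqrt (D k * Q k)) ^ 2 ≤ (d : ℝ) * ∑ k, D k * Q k := by
      have := Finset.sum_mul_sq_le_sq_mul_sq Finset.univ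
        (fun _ : Fin d => (1 : ℝ)) (fun k => Real.sqrt (D k * Q k))
      simp only [one_mul, one_pow, Finset.sum_const, Finset.card_univ,
        Fintype.card_fin, nsmul_eq_mul, mul_one] at this
      calc (∑ k, Real.sqrt (D k * Q k)) ^ 2
          ≤ (d : ℝ) * ∑ k, Real.sqrt (D k * Q k) ^ 2 := this
        _ = (d : ℝ) * ∑ k, D k * Q k := by
            congr 1
            exact Finset.sum_congr rfl fun k _ =>
              Real.sq_sqrt (mul_nonneg (hDnn k) (hQnn k))
    calc (∑ k, s k) ^ 2 ≤ (∑ k, Real.sqrt (D k * Q k)) ^ 2 := by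
          apply pow_le_pow_left₀ (Finset.sum_nonneg fun k _ => (hs k).le)
          rw [htrCB]
          exact Finset.sum_le_sum fun k _ => hstep1 k
      _ ≤ (d : ℝ) * ∑ k, D k * Q k := hstep2
  have hdpos : (0 : ℝ) < d := Nat.cast_pos.mpr hd
  constructor
  · rw [hTr, htrS, ge_iff_le, inv_mul_le_iff₀ hdpos]
    linarith [hkey]
  · intro hHad hss' hR1
    have hsq : ∀ j, (s' j) ^ 2 = s j := fun j => by
      rw [hss' j]; exact Real.sq_sqrt (hs j).le
    have hU'sq : ∀ j k, (U' j k) ^ 2 = (d : ℝ)⁻¹ := by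
      intro j k
      have hd2 : Real.sqrt d ^ 2 = (d : ℝ) := Real.sq_sqrt (Nat.cast_nonneg d)
      rcases hHad j k with h | h <;> rw [h] <;>
        simp [inv_pow, hd2]
    have hDval : ∀ k, D k = (d : ℝ)⁻¹ * ∑ j, s j := by
      intro k
      rw [hD k]
      rw [Finset.mul_sum]
      refine Finset.sum_congr rfl fun j _ => ?_
      rw [hCdef, hR1]
      simp only [Matrix.transpose_one, Matrix.mul_one, Matrix.mul_diagonal]
      rw [mul_pow, hU'sq k j, hsq j]
    have hBval : ∀ j k, (B j k) ^ 2 = s j * (d : ℝ)⁻¹ := by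
      intro j k
      rw [hBdef, hR1]
      simp only [Matrix.mul_one, Matrix.diagonal_mul_diagonal]
      have : (Matrix.diagonal (fun i => s i * (s' i)⁻¹) * U'ᵀ) j k
          = (s j * (s' j)⁻¹) * U' k j := by
        rw [Matrix.diagonal_mul, Matrix.transpose_apply]
      rw [this, mul_pow, mul_pow, hU'sq k j, inv_pow, hsq j]
      have hsj := (hs j).ne'
      have hsq' := hsq j
      field_simp
    have hQval : ∀ k, Q k = (d : ℝ)⁻¹ * ∑ j, s j := by
      intro k
      rw [hQdef, Finset.mul_sum]
      exact Finset.sum_congr rfl fun j _ => by rw [hBval j k]; ring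
    rw [hTr, htrS]
    have : ∑ k, D k * Q k
        = ∑ k : Fin d, ((d : ℝ)⁻¹ * ∑ j, s j) * ((d : ℝ)⁻¹ * ∑ j, s j) :=
      Finset.sum_congr rfl fun k _ => by rw [hDval k, hQval k]
    rw [this, Finset.sum_const, Finset.card_univ, Fintype.card_fin, nsmul_eq_mul]
    field_simp
end
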